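/- arXiv:2103.07105 — 12 statements merged into one kernel-verified Lean document; each statement's English description precedes it below -/
import Mathlib

section
/- Every co-quasiorder κ on a set X with apartness is a strongly extensional subset of X × X: for all (a,b) with κ a b and all (x,y), either κ x y or (x,y) # (a,b) (in the product apartness). -/
theorem coquasiorder_strongly_extensional
    {X : Type*} (apart : X → X → Prop)
    (irrefl : ∀ x, ¬ apart x x)
    (symm : ∀ x y, apart x y → apart y x)
    (cotrans : ∀ x y z, apart x z → apart x y ∨ apart y z)
    (κ : X → X → Prop)
    (hsi : ∀ x y, κ x y → apart x y)
    (hcot : ∀ x y z, κ x z → κ x y ∨ κ y z) :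
    ∀ a b, κ a b → ∀ x y, κ x y ∨ apart x a ∨ apart y b := by
  intro a b hab x y
  rcases hcot a x b hab with h | h
  · exact Or.inr (Or.inl (symm _ _ (hsi _ _ h)))
  · rcases hcot x y b h with h' | h'
    · exact Or.inl h'
    · exact Or.inr (Or.inr (hsi _ _ h'))
end

section
/- Let ε be an equivalence relation and κ a coequivalence on a set X with apartness. Then κ is extensional with respect to ε (i.e., x ε x' and y ε y' and κ x y imply κ x' y') if and only if ε ∩ κ = ∅. -/
theorem coequivalence_extensional_iff_disjoint
    {X : Type*} (apart : X → X → Prop)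
    (irrefl : ∀ x, ¬ apart x x)
    (symm : ∀ x y, apart x y → apart y x)
    (cotrans : ∀ x y z, apart x z → apart x y ∨ apart y z)
    (ε : X → X → Prop) (hε : Equivalence ε)
    (κ : X → X → Prop)
    (hsi : ∀ x y, κ x y → apart x y)
    (hsymm : ∀ x y, κ x y → κ y x)
    (hcot : ∀ x y z, κ x z → κ x y ∨ κ y z) :
    (∀ x x' y y', ε x x' → ε y y' → κ x y → κ x' y')
      ↔ (∀ x y, ¬ (ε x y ∧ κ x y)) := by
  constructor
  · intro hext x y ⟨he, hk⟩
    exact irrefl y (hsi y y (hext x y y y he (hε.refl y) hk))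
  · intro hd x x' y y' he1 he2 hk
    rcases hcot x x' y hk with h | h
    · exact absurd ⟨he1, h⟩ (hd x x')
    · rcases hcot x' y' y h with h2 | h2
      · exact h2
      · exact absurd ⟨hε.symm he2, h2⟩ (hd y' y)
end

section
/- Let α ⊆ X × Y be a relation between sets with apartness. Then α is a strongly extensional subset of X × Y (with the product apartness) if and only if for every x ∈ X the slice xα = {y | α x y} ⊆ Y and for every y ∈ Y the slice αy = {x | α x y} ⊆ X are strongly extensional. -/
theorem relation_strongly_extensional_iff_slices
    {X Y : Type*} (apX : X → X → Prop) (apY : Y → Y → Prop)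
    (irreflX : ∀ x, ¬ apX x x) (symmX : ∀ x y, apX x y → apX y x)
    (cotransX : ∀ x y z, apX x z → apX x y ∨ apX y z)
    (irreflY : ∀ x, ¬ apY x x) (symmY : ∀ x y, apY x y → apY y x)
    (cotransY : ∀ x y z, apY x z → apY x y ∨ apY y z)
    (α : X → Y → Prop) :
    (∀ a b, α a b → ∀ x y, α x y ∨ apX x a ∨ apY y b)
      ↔ ((∀ x, ∀ b, α x b → ∀ y, α x y ∨ apY y b) ∧
         (∀ y, ∀ a, α a y → ∀ x, α x y ∨ apX x a)) := by
  constructor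
  · intro h
    constructor
    · intro x b hxb y
      rcases h x b hxb x y with h'|h'|h'
      · exact Or.inl h'
      · exact absurd h' (irreflX x)
      · exact Or.inr h'
    · intro y a hay x
      rcases h a y hay x y with h'|h'|h'
      · exact Or.inl h'
      · exact Or.inr h'
      · exact absurd h' (irreflY y)
  · rintro ⟨hrow, hcol⟩ a b hab x y
    rcases hcol b a hab x with h'|h'
    · rcases hrow x b h' y with h''|h''
      · exact Or.inl h''
      · exact Or.inr (Or.inr h'')
    · exact Or.inr (Or.inl h')
end

section
/- If α ⊆ X × Y and β ⊆ Y × Z are strongly extensional relations between sets with apartness, then their composition α ∘ β = {(x,z) | ∃y, α x y ∧ β y z} is a strongly extensional subset of X × Z. -/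
theorem composition_strongly_extensional
    {X Y Z : Type*} (apX : X → X → Prop) (apY : Y → Y → Prop) (apZ : Z → Z → Prop)
    (irreflX : ∀ x, ¬ apX x x) (symmX : ∀ x y, apX x y → apX y x)
    (cotransX : ∀ x y z, apX x z → apX x y ∨ apX y z)
    (irreflY : ∀ x, ¬ apY x x) (symmY : ∀ x y, apY x y → apY y x)
    (cotransY : ∀ x y z, apY x z → apY x y ∨ apY y z)
    (irreflZ : ∀ x, ¬ apZ x x) (symmZ : ∀ x y, apZ x y → apZ y x)
    (cotransZ : ∀ x y z, apZ x z → apZ x y ∨ apZ y z)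
    (α : X → Y → Prop) (β : Y → Z → Prop)
    (hα : ∀ a b, α a b → ∀ x y, α x y ∨ apX x a ∨ apY y b)
    (hβ : ∀ a b, β a b → ∀ x y, β x y ∨ apY x a ∨ apZ y b) :
    ∀ a c, (∃ b, α a b ∧ β b c) →
      ∀ x z, (∃ y, α x y ∧ β y z) ∨ apX x a ∨ apZ z c := by
  rintro a c ⟨b, hab, hbc⟩ x z
  rcases hα a b hab x b with h1 | h1 | h1
  · rcases hβ b c hbc b z with h2 | h2 | h2
    · exact Or.inl ⟨b, h1, h2⟩
    · exact absurd h2 (irreflY b)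
    · exact Or.inr (Or.inr h2)
  · exact Or.inr (Or.inl h1)
  · exact absurd h1 (irreflY b)
end

section
/- Every finite set X (one admitting a surjection from Fin n for some n) satisfies the constant domains principle: for every predicate P : X → Prop and every proposition Q, (∀ x, P x ∨ Q) → (∀ x, P x) ∨ Q, and this can be proved without using the law of excluded middle. -/
theorem fin_cd (Q : Prop) : ∀ (n : ℕ) (g : Fin n → Prop), (∀ i, g i ∨ Q) → (∀ i, g i) ∨ Q := by
  intro n
  induction n with
  | zero => intro g _; exact Or.inl (fun i => i.elim0)
  | succ m ih =>
    intro g h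
    rcases ih (fun i => g i.castSucc) (fun i => h i.castSucc) with hall | hq
    · rcases h (Fin.last m) with hl | hq
      · left
        intro i
        exact Fin.lastCases hl hall i
      · exact Or.inr hq
    · exact Or.inr hq

theorem finitely_enumerable_constant_domains
    {X : Type*} (n : ℕ) (f : Fin n → X) (hf : Function.Surjective f)
    (P : X → Prop) (Q : Prop) :
    (∀ x, P x ∨ Q) → (∀ x, P x) ∨ Q := by
  intro h
  rcases fin_cd Q n (fun i => P (f i)) (fun i => h (f i)) with hall | hq
  · left
    intro x
    obtain ⟨i, rfl⟩ := hf x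
    exact hall i
  · exact Or.inr hq
end

section
/- Let X be a set with d elements (admitting a surjection from Fin d) and let α be a relation on X. Writing α^{*n} for the n-fold filled power (α^{*1} = α, α^{*(n+1)} = α * α^{*n}), one has α ∩ α^{*2} ∩ ⋯ ∩ α^{*(d+2)} ⊆ α^{*(n+1)} for all natural numbers n; consequently α ∩ α^{*2} ∩ ⋯ ∩ α^{*(d+2)} equals the intersection of all filled powers of α. -/
/-!
Unfolding the filled product, `α^{*(n+1)} x y` says that every chain
`x = g 0, g 1, …, g (n+1) = y` has some step `α (g i) (g (i+1))`. If `n ≥ |X|`, two of the points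
`g 0, …, g n` coincide; cutting out the loop between them leaves a shorter chain from `x` to `y`
each of whose steps is a step of `g`. So `α^{*(n+1)}` contains the intersection of the lower
powers, and by induction all filled powers contain the first `|X|` of them.
-/

/-- The filled product of relations. -/
def filledProd {X : Type*} (α β : X → X → Prop) : X → X → Prop :=
  fun x y => ∀ z, α x z ∨ β z y

/-- `filledPow α n` is the `(n+1)`-st filled power `α^{*(n+1)}` of `α`. -/
def filledPow {X : Type*} (α : X → X → Prop) : ℕ → (X → X → Prop)
  | 0 => α
  | n + 1 => filledProd α (filledPow α n)

section FilledPow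

variable {X : Type*}

theorem filledPow_iff_forall_path (α : X → X → Prop) (n : ℕ) (x y : X) :
    filledPow α n x y ↔
      ∀ g : ℕ → X, g 0 = x → g (n + 1) = y → ∃ i ≤ n, α (g i) (g (i + 1)) := by
  induction n generalizing x with
  | zero =>
    refine ⟨fun h g hx hy => ⟨0, le_rfl, hx ▸ hy ▸ h⟩, fun h => ?_⟩
    obtain ⟨i, hi, hα⟩ := h (fun t => if t = 0 then x else y) rfl rfl
    obtain rfl := Nat.le_zero.mp hi
    exact hα
  | succ n ih =>
    simp only [filledPow, filledProd, ih]
    constructor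
    · intro h g hx hy
      refine (h (g 1)).elim (fun hα => ⟨0, by omega, hx ▸ hα⟩) fun hpath => ?_
      obtain ⟨i, hi, hα⟩ := hpath (fun t => g (t + 1)) rfl hy
      exact ⟨i + 1, by omega, hα⟩
    · intro h z
      refine or_iff_not_imp_left.mpr fun hxz g hz hy => ?_
      obtain ⟨_ | i, hi, hα⟩ := h (fun t => Nat.casesOn t x g) rfl hy
      · exact absurd (hz ▸ hα) hxz
      · exact ⟨i, by omega, hα⟩

def cutLoop (g : ℕ → X) (i c : ℕ) : ℕ → X :=
  fun t => if t ≤ i then g t else g (t + c)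

theorem exists_step_eq_cutLoop_step {g : ℕ → X} {i c : ℕ} (hloop : g i = g (i + c)) (t : ℕ) :
    ∃ s ≤ t + c, cutLoop g i c t = g s ∧ cutLoop g i c (t + 1) = g (s + 1) := by
  unfold cutLoop
  rcases lt_trichotomy t i with hlt | rfl | hgt
  · exact ⟨t, by omega, by simp [hlt.le, Nat.succ_le_of_lt hlt]⟩
  · exact ⟨t + c, le_rfl, by simp [hloop, Nat.add_right_comm]⟩
  · exact ⟨t + c, le_rfl,
      by simp [show ¬t ≤ i by omega, show ¬t + 1 ≤ i by omega, Nat.add_right_comm]⟩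

theorem exists_loop_of_card_le [Finite X] {n : ℕ} (hn : Nat.card X ≤ n) (g : ℕ → X) :
    ∃ i c, 0 < c ∧ i + c ≤ n ∧ g i = g (i + c) := by
  have hnotinj : ¬ Function.Injective fun t : Fin (n + 1) => g t := fun hinj => by
    simpa using (Nat.card_le_card_of_injective _ hinj).trans hn
  obtain ⟨a, b, hab, hne⟩ := Function.not_injective_iff.mp hnotinj
  wlog hlt : a < b generalizing a b
  · exact this b a hab.symm hne.symm (lt_of_le_of_ne (not_lt.mp hlt) hne.symm)
  exact ⟨a, b - a, by omega, by omega, by simpa [Nat.add_sub_cancel' hlt.le] using hab⟩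

theorem filledPow_of_forall_lt [Finite X] {α : X → X → Prop} {n : ℕ} {x y : X}
    (hn : Nat.card X ≤ n) (h : ∀ m < n, filledPow α m x y) : filledPow α n x y := by
  refine (filledPow_iff_forall_path α n x y).mpr fun g hx hy => ?_
  obtain ⟨i, c, hc, hic, hloop⟩ := exists_loop_of_card_le hn g
  have hcut : filledPow α (n - c) x y := h (n - c) (by omega)
  obtain ⟨t, ht, hα⟩ := (filledPow_iff_forall_path α (n - c) x y).mp hcut (cutLoop g i c)
    (by simp [cutLoop, hx])
    (by simp [cutLoop, show ¬n - c + 1 ≤ i by omega, show n - c + 1 + c = n + 1 by omega, hy])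
  obtain ⟨s, hs, hts, hts'⟩ := exists_step_eq_cutLoop_step hloop t
  exact ⟨s, by omega, hts ▸ hts' ▸ hα⟩

theorem filledPow_of_forall_lt_card [Finite X] {α : X → X → Prop} {x y : X}
    (h : ∀ m < Nat.card X, filledPow α m x y) (n : ℕ) : filledPow α n x y := by
  induction n using Nat.strong_induction_on with
  | _ n ih =>
    rcases lt_or_ge n (Nat.card X) with hn | hn
    · exact h n hn
    · exact filledPow_of_forall_lt hn ih

end FilledPow

theorem finite_intersection_of_filled_powers
    {X : Type*} (d : ℕ) (f : Fin d → X) (hf : Function.Surjective f)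
    (α : X → X → Prop) :
    ∀ x y, (∀ k ≤ d + 1, filledPow α k x y) ↔ (∀ n, filledPow α n x y) := by
  have : Finite X := Finite.of_surjective f hf
  have hcard : Nat.card X ≤ d := by simpa using Nat.card_le_card_of_surjective f hf
  exact fun x y => ⟨fun h => filledPow_of_forall_lt_card fun m hm => h m (by omega),
    fun h k _ => h k⟩
end

section
/- Let S be a semigroup with apartness, κ a co-congruence on S, and a, x ∈ S with x an inverse of a² (i.e., a²xa² = a² and xa²x = x). If κ a (a·x·a), then κ a a². -/
theorem co_lallement
    {S : Type*} [Semigroup S] (apart : S → S → Prop)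
    (irrefl : ∀ x, ¬ apart x x)
    (symm : ∀ x y, apart x y → apart y x)
    (cotrans : ∀ x y z, apart x z → apart x y ∨ apart y z)
    (mulse : ∀ s t u v : S, apart (s * u) (t * v) → apart s t ∨ apart u v)
    (κ : S → S → Prop)
    (hsi : ∀ x y, κ x y → apart x y)
    (hsymm : ∀ x y, κ x y → κ y x)
    (hcot : ∀ x y z, κ x z → κ x y ∨ κ y z)
    (hcc : ∀ a b x y, κ (a * x) (b * y) → κ a b ∨ κ x y)
    (a x : S)
    (hinv1 : a * a * x * (a * a) = a * a)
    (hinv2 : x * (a * a) * x = x)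
    (h : κ a (a * x * a)) :
    κ a (a * a) := by
  have hne : ∀ w : S, ¬ κ w w := fun w hw => irrefl w (hsi w w hw)
  rcases hcot a (a * a * x * a) (a * x * a) h with hA | hB
  · rcases hcot a (a * a) (a * a * x * a) hA with hg | hB2
    · exact hg
    · have hk : κ ((a * a * x) * (a * a)) ((a * a * x) * a) := by
        rw [hinv1]; exact hB2
      rcases hcc _ _ _ _ hk with h1 | h2
      · exact absurd h1 (hne _)
      · exact hsymm _ _ h2
  · have hk : κ ((a * a) * (x * a)) (a * (x * a)) := by
      simpa [mul_assoc] using hB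
    rcases hcc _ _ _ _ hk with h1 | h2
    · exact hsymm _ _ h1
    · exact absurd h2 (hne _)
end

section
/- Let S be a semigroup with apartness, and let a, x ∈ S be such that a² is regular with inverse x (a²xa² = a², xa²x = x). Then the following are equivalent: (i) a # e for every idempotent e of S; (ii) a # a·x·a; (iii) a # a². -/
theorem apart_from_idempotents_tfae
    {S : Type*} [Semigroup S] (apart : S → S → Prop)
    (irrefl : ∀ x, ¬ apart x x)
    (symm : ∀ x y, apart x y → apart y x)
    (cotrans : ∀ x y z, apart x z → apart x y ∨ apart y z)
    (mulse : ∀ s t u v : S, apart (s * u) (t * v) → apart s t ∨ apart u v)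
    (a x : S)
    (hinv1 : a * a * x * (a * a) = a * a)
    (hinv2 : x * (a * a) * x = x) :
    ((∀ e : S, e * e = e → apart a e) ↔ apart a (a * x * a)) ∧
    (apart a (a * x * a) ↔ apart a (a * a)) := by
  -- a*x*a is idempotent
  have hid : (a * x * a) * (a * x * a) = a * x * a := by
    have : (a * x * a) * (a * x * a) = a * (x * (a * a) * x) * a := by
      simp [mul_assoc]
    rw [this, hinv2]
  -- (iii) → (i)
  have h31 : apart a (a * a) → ∀ e : S, e * e = e → apart a e := by
    intro h3 e he
    rcases cotrans a e (a * a) h3 with h | h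
    · exact h
    · rw [← he] at h
      rcases mulse e a e a h with h' | h'
      · exact symm _ _ h'
      · exact symm _ _ h'
  -- (ii) → (iii)
  have h23 : apart a (a * x * a) → apart a (a * a) := by
    intro h2
    rcases cotrans a (a * a) (a * x * a) h2 with h | h
    · exact h
    · rw [← hinv1] at h
      rcases mulse (a * a * x) (a * x) (a * a) a h with h' | h'
      · rcases mulse (a * a) a x x h' with h'' | h''
        · exact symm _ _ h''
        · exact absurd h'' (irrefl x)
      · exact symm _ _ h'
  constructor
  · constructor
    · intro h1
      exact h1 _ hid
    · intro h2 e he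
      exact h31 (h23 h2) e he
  · constructor
    · exact h23
    · intro h3
      exact h31 h3 _ hid
end

section
/- Let S be a semigroup with apartness and let A ⊆ S be a strongly extensional subset. Then the relation κ_A defined by κ_A x y ↔ (x # y ∧ (x ∈ A ∨ y ∈ A)) is a coequivalence (strongly irreflexive, symmetric, cotransitive). -/
theorem kappaA_coequivalence
    {S : Type*} [Semigroup S] (apart : S → S → Prop)
    (irrefl : ∀ x, ¬ apart x x)
    (symm : ∀ x y, apart x y → apart y x)
    (cotrans : ∀ x y z, apart x z → apart x y ∨ apart y z)
    (A : Set S)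
    (hse : ∀ a ∈ A, ∀ x, x ∈ A ∨ apart x a) :
    (∀ x y, (apart x y ∧ (x ∈ A ∨ y ∈ A)) → apart x y) ∧
    (∀ x y, (apart x y ∧ (x ∈ A ∨ y ∈ A)) → (apart y x ∧ (y ∈ A ∨ x ∈ A))) ∧
    (∀ x y z, (apart x z ∧ (x ∈ A ∨ z ∈ A)) →
      (apart x y ∧ (x ∈ A ∨ y ∈ A)) ∨ (apart y z ∧ (y ∈ A ∨ z ∈ A))) := by
  refine ⟨fun x y h => h.1, fun x y h => ⟨symm x y h.1, h.2.symm⟩, ?_⟩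
  intro x y z ⟨hxz, hA⟩
  rcases cotrans x y z hxz with hxy | hyz
  · rcases hA with hx | hz
    · exact Or.inl ⟨hxy, Or.inl hx⟩
    · rcases hse z hz y with hy | h
      · exact Or.inl ⟨hxy, Or.inr hy⟩
      · exact Or.inr ⟨h, Or.inr hz⟩
  · rcases hA with hx | hz
    · rcases hse x hx y with hy | h
      · exact Or.inr ⟨hyz, Or.inl hy⟩
      · exact Or.inl ⟨symm y x h, Or.inl hx⟩
    · exact Or.inr ⟨hyz, Or.inr hz⟩
end

section
/- Let S be a semigroup with apartness and A ⊆ S a co-ideal (a strongly extensional subset that is convex: a·b ∈ A → a ∈ A, and a·b ∈ A → b ∈ A). Then: (1) the complement ¬A is a two-sided ideal of S; (2) the relation κ_A x y ↔ (x # y ∧ (x ∈ A ∨ y ∈ A)) is a co-congruence (coequivalence co-compatible with multiplication); (3) the Rees congruence ρ_{¬A} = {(x,y) | x = y ∨ (x ∈ ¬A ∧ y ∈ ¬A)} is contained in ¬κ_A. -/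
theorem rees_coideal_properties
    {S : Type*} [Semigroup S] (apart : S → S → Prop)
    (irrefl : ∀ x, ¬ apart x x)
    (symm : ∀ x y, apart x y → apart y x)
    (cotrans : ∀ x y z, apart x z → apart x y ∨ apart y z)
    (mulse : ∀ s t u v : S, apart (s * u) (t * v) → apart s t ∨ apart u v)
    (A : Set S)
    (hse : ∀ a ∈ A, ∀ x, x ∈ A ∨ apart x a)
    (hconv : ∀ a b : S, a * b ∈ A → a ∈ A ∧ b ∈ A) :
    -- (1) the complement ¬A is a two-sided ideal
    (∀ x y : S, x ∉ A → (x * y ∉ A ∧ y * x ∉ A)) ∧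
    -- (2) κ_A is a co-congruence
    ((∀ x y, (apart x y ∧ (x ∈ A ∨ y ∈ A)) → apart x y) ∧
     (∀ x y, (apart x y ∧ (x ∈ A ∨ y ∈ A)) → (apart y x ∧ (y ∈ A ∨ x ∈ A))) ∧
     (∀ x y z, (apart x z ∧ (x ∈ A ∨ z ∈ A)) →
       (apart x y ∧ (x ∈ A ∨ y ∈ A)) ∨ (apart y z ∧ (y ∈ A ∨ z ∈ A))) ∧
     (∀ a b x y : S, (apart (a * x) (b * y) ∧ (a * x ∈ A ∨ b * y ∈ A)) →
       (apart a b ∧ (a ∈ A ∨ b ∈ A)) ∨ (apart x y ∧ (x ∈ A ∨ y ∈ A)))) ∧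
    -- (3) the Rees congruence is contained in ¬κ_A
    (∀ x y : S, (x = y ∨ (x ∉ A ∧ y ∉ A)) → ¬ (apart x y ∧ (x ∈ A ∨ y ∈ A))) := by
  refine ⟨?_, ⟨fun x y h => h.1, ?_, ?_, ?_⟩, ?_⟩
  · intro x y hx
    exact ⟨fun h => hx (hconv x y h).1, fun h => hx (hconv y x h).2⟩
  · rintro x y ⟨h, hm⟩
    exact ⟨symm _ _ h, hm.symm⟩
  · rintro x y z ⟨hxz, hm⟩
    rcases cotrans x y z hxz with h | h
    · rcases hm with hx | hz
      · exact Or.inl ⟨h, Or.inl hx⟩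
      · rcases hse z hz y with hy | hyz
        · exact Or.inl ⟨h, Or.inr hy⟩
        · exact Or.inr ⟨hyz, Or.inr hz⟩
    · rcases hm with hx | hz
      · rcases hse x hx y with hy | hyx
        · exact Or.inr ⟨h, Or.inl hy⟩
        · exact Or.inl ⟨symm _ _ hyx, Or.inl hx⟩
      · exact Or.inr ⟨h, Or.inr hz⟩
  · rintro a b x y ⟨h, hm⟩
    have hmem : (a ∈ A ∨ b ∈ A) ∧ (x ∈ A ∨ y ∈ A) := by
      rcases hm with h1 | h1
      · exact ⟨Or.inl (hconv _ _ h1).1, Or.inl (hconv _ _ h1).2⟩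
      · exact ⟨Or.inr (hconv _ _ h1).1, Or.inr (hconv _ _ h1).2⟩
    rcases mulse a b x y h with h | h
    · exact Or.inl ⟨h, hmem.1⟩
    · exact Or.inr ⟨h, hmem.2⟩
  · rintro x y (rfl | ⟨hx, hy⟩) ⟨h, hm⟩
    · exact irrefl x h
    · exact hm.elim hx hy
end

section
/- Let S be a semigroup with apartness in which the constant domains principle holds for the relevant predicates. Define a ≻_l b ↔ ∀ s ∈ S¹, a # s·b (where S¹ adjoins an identity). Then ≻_l is a co-quasiorder: it is strongly irreflexive and cotransitive. -/
/-- `a ≻_l b`: `a` is apart from every element of the principal left ideal `S¹b`,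
i.e. `a # b` (the case `s = 1`) and `a # s*b` for all `s ∈ S`. -/
def succL {S : Type*} [Semigroup S] (apart : S → S → Prop) (a b : S) : Prop :=
  apart a b ∧ ∀ s : S, apart a (s * b)

theorem succL_coquasiorder
    {S : Type*} [Semigroup S] (apart : S → S → Prop)
    (irrefl : ∀ x, ¬ apart x x)
    (symm : ∀ x y, apart x y → apart y x)
    (cotrans : ∀ x y z, apart x z → apart x y ∨ apart y z)
    (mulse : ∀ s t u v : S, apart (s * u) (t * v) → apart s t ∨ apart u v)
    (hCD : ∀ (P : S → Prop) (Q : Prop), (∀ x, P x ∨ Q) → (∀ x, P x) ∨ Q) :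
    (∀ a b, succL apart a b → apart a b) ∧
    (∀ a b c, succL apart a b → succL apart a c ∨ succL apart c b) := by
  constructor
  · exact fun a b h => h.1
  · intro a b c ⟨hab, hsb⟩
    -- Key1 : ∀ x, apart a (x*c) ∨ apart c b
    have key1 : ∀ x, apart a (x * c) ∨ apart c b := by
      intro x
      rcases cotrans a (x * c) (x * b) (hsb x) with h | h
      · exact Or.inl h
      · rcases mulse x x c b h with h' | h'
        · exact absurd h' (irrefl x)
        · exact Or.inr h'
    -- Key2 : ∀ y, apart a c ∨ apart c (y*b)
    have key2 : ∀ y, apart a c ∨ apart c (y * b) := fun y => cotrans a c (y * b) (hsb y)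
    -- Key3 : apart a c ∨ apart c b
    have key3 : apart a c ∨ apart c b := cotrans a c b hab
    -- Key4 : ∀ x y, apart a (x*c) ∨ apart c (y*b)
    have key4 : ∀ y x, apart a (x * c) ∨ apart c (y * b) := by
      intro y x
      have h : apart a (x * (y * b)) := by
        have := hsb (x * y); rwa [mul_assoc] at this
      rcases cotrans a (x * c) (x * (y * b)) h with h' | h'
      · exact Or.inl h'
      · rcases mulse x x c (y * b) h' with h'' | h''
        · exact absurd h'' (irrefl x)
        · exact Or.inr h''
    -- (∀ x, apart a (x*c)) ∨ apart c b
    have step1 : succL apart a c ∨ apart c b := by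
      rcases hCD (fun x => apart a (x * c)) (apart c b) key1 with h | h
      · rcases key3 with h' | h'
        · exact Or.inl ⟨h', h⟩
        · exact Or.inr h'
      · exact Or.inr h
    -- for each y, succL a c ∨ apart c (y*b)
    have step2 : (∀ y, apart c (y * b)) ∨ succL apart a c := by
      apply hCD
      intro y
      rcases hCD (fun x => apart a (x * c)) (apart c (y * b)) (key4 y) with h | h
      · rcases key2 y with h' | h'
        · exact Or.inr ⟨h', h⟩
        · exact Or.inl h'
      · exact Or.inl h
    rcases step1 with h | hcb
    · exact Or.inl h
    · rcases step2 with h | h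
      · exact Or.inr ⟨hcb, h⟩
      · exact Or.inl h
end

section
/- Let S be a semigroup with apartness satisfying the constant domains principle for apartness predicates, and let e ∈ S be an idempotent. Then the set e𝒽 = {x | e 𝓁 x ∨ e 𝓇 x} is a co-subsemigroup of S: it is strongly extensional, and x·y ∈ e𝒽 implies x ∈ e𝒽 ∨ y ∈ e𝒽. Here 𝓁 = (≻_l) ∪ (≻_l)⁻¹ and 𝓇 = (≻_r) ∪ (≻_r)⁻¹ with a ≻_l b ↔ ∀s ∈ S¹, a # s·b and a ≻_r b ↔ ∀s ∈ S¹, a # b·s. -/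
/-- `a ≻_r b`: `a # b*s` for all `s ∈ S¹`. -/
def succR {S : Type*} [Semigroup S] (apart : S → S → Prop) (a b : S) : Prop :=
  apart a b ∧ ∀ s : S, apart a (b * s)

/-- The coequivalence `𝓁 = (≻_l) ∪ (≻_l)⁻¹`. -/
def coL {S : Type*} [Semigroup S] (apart : S → S → Prop) (a b : S) : Prop :=
  succL apart a b ∨ succL apart b a

/-- The coequivalence `𝓇 = (≻_r) ∪ (≻_r)⁻¹`. -/
def coR {S : Type*} [Semigroup S] (apart : S → S → Prop) (a b : S) : Prop :=
  succR apart a b ∨ succR apart b a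

theorem eH_cosubsemigroup
    {S : Type*} [Semigroup S] (apart : S → S → Prop)
    (irrefl : ∀ x, ¬ apart x x)
    (symm : ∀ x y, apart x y → apart y x)
    (cotrans : ∀ x y z, apart x z → apart x y ∨ apart y z)
    (mulse : ∀ s t u v : S, apart (s * u) (t * v) → apart s t ∨ apart u v)
    (hCD : ∀ (P : S → Prop) (Q : Prop), (∀ x, P x ∨ Q) → (∀ x, P x) ∨ Q)
    (e : S) (he : e * e = e) :
    -- e𝒽 is strongly extensional
    (∀ a, (coL apart e a ∨ coR apart e a) →
      ∀ x, (coL apart e x ∨ coR apart e x) ∨ apart x a) ∧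
    -- e𝒽 is closed under the co-subsemigroup condition
    (∀ x y : S, (coL apart e (x * y) ∨ coR apart e (x * y)) →
      (coL apart e x ∨ coR apart e x) ∨ (coL apart e y ∨ coR apart e y)) := by
  classical
  have qsymm : ∀ a b : S, ¬ apart a b → ¬ apart b a := fun a b h hb => h (symm b a hb)
  have qtrans : ∀ a b c : S, ¬ apart a b → ¬ apart b c → ¬ apart a c :=
    fun a b c h1 h2 h => (cotrans a b c h).elim h1 h2
  have qmul : ∀ a b c d : S, ¬ apart a b → ¬ apart c d → ¬ apart (a * c) (b * d) :=
    fun a b c d h1 h2 h => (mulse a b c d h).elim h1 h2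
  constructor
  · -- strong extensionality
    intro a ha x
    by_cases hxa : apart x a
    · exact Or.inr hxa
    · left
      rcases ha with (h | h) | (h | h)
      · exact Or.inl (Or.inl ⟨(cotrans e x a h.1).resolve_right hxa,
          fun s => (cotrans e (s * x) (s * a) (h.2 s)).resolve_right
            (fun hh => hxa ((mulse s s x a hh).resolve_left (irrefl s)))⟩)
      · exact Or.inl (Or.inr ⟨(cotrans a x e h.1).resolve_left (fun hh => hxa (symm a x hh)),
          fun s => (cotrans a x (s * e) (h.2 s)).resolve_left (fun hh => hxa (symm a x hh))⟩)
      · exact Or.inr (Or.inl ⟨(cotrans e x a h.1).resolve_right hxa,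
          fun s => (cotrans e (x * s) (a * s) (h.2 s)).resolve_right
            (fun hh => hxa ((mulse x a s s hh).resolve_right (irrefl s)))⟩)
      · exact Or.inr (Or.inr ⟨(cotrans a x e h.1).resolve_left (fun hh => hxa (symm a x hh)),
          fun s => (cotrans a x (e * s) (h.2 s)).resolve_left (fun hh => hxa (symm a x hh))⟩)
  · -- co-subsemigroup condition
    intro x y hxy
    by_contra hcon
    obtain ⟨hx, hy⟩ := not_or.mp hcon
    obtain ⟨hxL, hxR⟩ := not_or.mp hx
    obtain ⟨hyL, hyR⟩ := not_or.mp hy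
    obtain ⟨hxLl, hxLr⟩ := not_or.mp hxL
    obtain ⟨hxRl, hxRr⟩ := not_or.mp hxR
    obtain ⟨hyLl, hyLr⟩ := not_or.mp hyL
    obtain ⟨hyRl, hyRr⟩ := not_or.mp hyR
    have div : ∀ (P : Prop) (f : S → Prop), ¬ (P ∧ ∀ s, f s) → ¬ P ∨ ∃ s, ¬ f s := by
      intro P f h
      by_cases hp : P
      · right; by_contra hc; push_neg at hc; exact h ⟨hp, hc⟩
      · exact Or.inl hp
    -- "divisibility" data from the negated memberships
    have dLx : ¬ apart e x ∨ ∃ s, ¬ apart e (s * x) :=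
      div (apart e x) (fun s => apart e (s * x)) hxLl
    have dLxe : ¬ apart x e ∨ ∃ s, ¬ apart x (s * e) :=
      div (apart x e) (fun s => apart x (s * e)) hxLr
    have dRx : ¬ apart e x ∨ ∃ s, ¬ apart e (x * s) :=
      div (apart e x) (fun s => apart e (x * s)) hxRl
    have dRxe : ¬ apart x e ∨ ∃ s, ¬ apart x (e * s) :=
      div (apart x e) (fun s => apart x (e * s)) hxRr
    have dLy : ¬ apart e y ∨ ∃ s, ¬ apart e (s * y) :=
      div (apart e y) (fun s => apart e (s * y)) hyLl
    have dLye : ¬ apart y e ∨ ∃ s, ¬ apart y (s * e) :=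
      div (apart y e) (fun s => apart y (s * e)) hyLr
    have dRy : ¬ apart e y ∨ ∃ s, ¬ apart e (y * s) :=
      div (apart e y) (fun s => apart e (y * s)) hyRl
    have dRye : ¬ apart y e ∨ ∃ s, ¬ apart y (e * s) :=
      div (apart y e) (fun s => apart y (e * s)) hyRr
    -- key facts : e*x ≈ x, x*e ≈ x, e*y ≈ y, y*e ≈ y
    have fact_ex : ¬ apart (e * x) x := by
      rcases dRxe with h | ⟨s, hs⟩
      · have h1 : ¬ apart (e * x) (e * e) := qmul e e x e (irrefl e) h
        rw [he] at h1
        exact qtrans _ _ _ h1 (qsymm _ _ h)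
      · have h1 : ¬ apart (e * x) (e * (e * s)) := qmul e e x (e * s) (irrefl e) hs
        rw [← mul_assoc, he] at h1
        exact qtrans _ _ _ h1 (qsymm _ _ hs)
    have fact_xe : ¬ apart (x * e) x := by
      rcases dLxe with h | ⟨s, hs⟩
      · have h1 : ¬ apart (x * e) (e * e) := qmul x e e e h (irrefl e)
        rw [he] at h1
        exact qtrans _ _ _ h1 (qsymm _ _ h)
      · have h1 : ¬ apart (x * e) ((s * e) * e) := qmul x (s * e) e e hs (irrefl e)
        rw [mul_assoc, he] at h1
        exact qtrans _ _ _ h1 (qsymm _ _ hs)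
    have fact_ey : ¬ apart (e * y) y := by
      rcases dRye with h | ⟨s, hs⟩
      · have h1 : ¬ apart (e * y) (e * e) := qmul e e y e (irrefl e) h
        rw [he] at h1
        exact qtrans _ _ _ h1 (qsymm _ _ h)
      · have h1 : ¬ apart (e * y) (e * (e * s)) := qmul e e y (e * s) (irrefl e) hs
        rw [← mul_assoc, he] at h1
        exact qtrans _ _ _ h1 (qsymm _ _ hs)
    have fact_ye : ¬ apart (y * e) y := by
      rcases dLye with h | ⟨s, hs⟩
      · have h1 : ¬ apart (y * e) (e * e) := qmul y e e e h (irrefl e)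
        rw [he] at h1
        exact qtrans _ _ _ h1 (qsymm _ _ h)
      · have h1 : ¬ apart (y * e) ((s * e) * e) := qmul y (s * e) e e hs (irrefl e)
        rw [mul_assoc, he] at h1
        exact qtrans _ _ _ h1 (qsymm _ _ hs)
    -- the four refutations of membership of x*y
    have G2 : ¬ succL apart (x * y) e := by
      intro h
      have h1 : ¬ apart (x * (y * e)) (x * y) := qmul x x (y * e) y (irrefl x) fact_ye
      rw [← mul_assoc] at h1
      exact qsymm _ _ h1 (h.2 (x * y))
    have G4 : ¬ succR apart (x * y) e := by
      intro h
      have h1 : ¬ apart ((e * x) * y) (x * y) := qmul (e * x) x y y fact_ex (irrefl y)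
      rw [mul_assoc] at h1
      exact qsymm _ _ h1 (h.2 (x * y))
    have G1 : ¬ succL apart e (x * y) := by
      intro h
      rcases dLy with hy1 | ⟨t, ht⟩
      · -- e ≈ y, so e ≈ e*y
        have hEey : ¬ apart e (e * y) := qtrans _ _ _ hy1 (qsymm _ _ fact_ey)
        rcases dLx with hx1 | ⟨s, hs⟩
        · have h1 : ¬ apart (e * y) (x * y) := qmul e x y y hx1 (irrefl y)
          exact (qtrans _ _ _ hEey h1) h.1
        · have h1 : ¬ apart (e * y) ((s * x) * y) := qmul e (s * x) y y hs (irrefl y)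
          have h2 : ¬ apart e ((s * x) * y) := qtrans _ _ _ hEey h1
          rw [mul_assoc] at h2
          exact h2 (h.2 s)
      · -- e ≈ t*y ≈ t*(e*y)
        have hE : ¬ apart e (t * (e * y)) :=
          qtrans _ _ _ ht (qmul t t y (e * y) (irrefl t) (qsymm _ _ fact_ey))
        rcases dLx with hx1 | ⟨s, hs⟩
        · have h1 : ¬ apart (t * (e * y)) (t * (x * y)) :=
            qmul t t (e * y) (x * y) (irrefl t) (qmul e x y y hx1 (irrefl y))
          have h2 : ¬ apart e (t * (x * y)) := qtrans _ _ _ hE h1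
          exact h2 (h.2 t)
        · have h1 : ¬ apart (t * (e * y)) (t * ((s * x) * y)) :=
            qmul t t (e * y) ((s * x) * y) (irrefl t) (qmul e (s * x) y y hs (irrefl y))
          have h2 : ¬ apart e (t * ((s * x) * y)) := qtrans _ _ _ hE h1
          rw [mul_assoc, ← mul_assoc t s (x * y)] at h2
          exact h2 (h.2 (t * s))
    have G3 : ¬ succR apart e (x * y) := by
      intro h
      rcases dRx with hx1 | ⟨s, hs⟩
      · -- e ≈ x ≈ x*e
        have hE : ¬ apart e (x * e) := qtrans _ _ _ hx1 (qsymm _ _ fact_xe)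
        rcases dRy with hy1 | ⟨t, ht⟩
        · have h1 : ¬ apart (x * e) (x * y) := qmul x x e y (irrefl x) hy1
          exact (qtrans _ _ _ hE h1) h.1
        · have h1 : ¬ apart (x * e) (x * (y * t)) := qmul x x e (y * t) (irrefl x) ht
          have h2 : ¬ apart e (x * (y * t)) := qtrans _ _ _ hE h1
          rw [← mul_assoc] at h2
          exact h2 (h.2 t)
      · -- e ≈ x*s ≈ (x*e)*s = x*(e*s)
        have hE : ¬ apart e (x * (e * s)) := by
          have h1 : ¬ apart (x * s) ((x * e) * s) :=
            qmul (x) (x * e) s s (qsymm _ _ fact_xe) (irrefl s)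
          rw [mul_assoc] at h1
          exact qtrans _ _ _ hs h1
        rcases dRy with hy1 | ⟨t, ht⟩
        · have h1 : ¬ apart (x * (e * s)) (x * (y * s)) :=
            qmul x x (e * s) (y * s) (irrefl x) (qmul e y s s hy1 (irrefl s))
          have h2 : ¬ apart e (x * (y * s)) := qtrans _ _ _ hE h1
          rw [← mul_assoc] at h2
          exact h2 (h.2 s)
        · have h1 : ¬ apart (x * (e * s)) (x * ((y * t) * s)) :=
            qmul x x (e * s) ((y * t) * s) (irrefl x) (qmul e (y * t) s s ht (irrefl s))
          have h2 : ¬ apart e (x * ((y * t) * s)) := qtrans _ _ _ hE h1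
          rw [mul_assoc y t s, ← mul_assoc x y (t * s)] at h2
          exact h2 (h.2 (t * s))
    rcases hxy with (h | h) | (h | h)
    · exact G1 h
    · exact G2 h
    · exact G3 h
    · exact G4 h
end
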